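/- With (A, A*) a Leonard pair whose tridiagonal-relation scalars are β, γ, γ*, ϱ, ϱ*, the following hold: γ = θ_{i−1} − β·θ_i + θ_{i+1} for 1 ≤ i ≤ d−1; and ϱ = θ_{i−1}² − β·θ_{i−1}·θ_i + θ_i² − γ·(θ_{i−1} + θ_i) for 1 ≤ i ≤ d, where θ_0, ..., θ_d are the ordered eigenvalues of A. -/

import Mathlib

/-- A square matrix is irreducible tridiagonal: nonzero entries lie within
distance one of the diagonal, and all sub- and superdiagonal entries are nonzero. -/
def IsIrreducibleTridiagonal {K : Type*} [Field K] {n : ℕ}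
    (M : Matrix (Fin n) (Fin n) K) : Prop :=
  (∀ i j : Fin n, ((i : ℕ) + 1 < j ∨ (j : ℕ) + 1 < i) → M i j = 0) ∧
  (∀ i j : Fin n, ((i : ℕ) + 1 = j ∨ (j : ℕ) + 1 = i) → M i j ≠ 0)

/-- The tridiagonal relations for the pair `(A, B)` with parameters `β, γ, γ*, ϱ, ϱ*`. -/
def TridiagonalRelations {K V : Type*} [Field K] [AddCommGroup V] [Module K V]
    (A B : Module.End K V) (β γ γs ϱ ϱs : K) : Prop :=
  (A * (A ^ 2 * B - β • (A * B * A) + B * A ^ 2 - γ • (A * B + B * A) - ϱ • B) =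
    (A ^ 2 * B - β • (A * B * A) + B * A ^ 2 - γ • (A * B + B * A) - ϱ • B) * A) ∧
  (B * (B ^ 2 * A - β • (B * A * B) + A * B ^ 2 - γs • (B * A + A * B) - ϱs • A) =
    (B ^ 2 * A - β • (B * A * B) + A * B ^ 2 - γs • (B * A + A * B) - ϱs • A) * B)

/-!
Eigenspaces of an unreduced lower Hessenberg matrix are one-dimensional, since an eigenvector is
determined row by row from its first coordinate; as `A` is diagonalizable with eigenbasis `c`, its
eigenvalues `θ i` are therefore distinct. In the basis `c` the `(i, j)` entry of the first
tridiagonal relation reads `(θ i - θ j) * P (θ i) (θ j) * B i j = 0`, where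
`P x y = x² - β x y + y² - γ (x + y) - ϱ`. Since `B i j ≠ 0` for adjacent `i, j`, we get
`P (θ (i-1)) (θ i) = 0`, the formula for `ϱ`; subtracting two consecutive instances gives
`(θ (i-1) - θ (i+1)) * (θ (i-1) - β θ i + θ (i+1) - γ) = 0`, the formula for `γ`.
-/

open Matrix

def Matrix.IsUnreducedLowerHessenberg {R : Type*} [Zero R] {n : ℕ}
    (M : Matrix (Fin n) (Fin n) R) : Prop :=
  (∀ i j : Fin n, (i : ℕ) + 1 < j → M i j = 0) ∧
    (∀ i j : Fin n, (i : ℕ) + 1 = j → M i j ≠ 0)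

theorem IsIrreducibleTridiagonal.isUnreducedLowerHessenberg {K : Type*} [Field K] {n : ℕ}
    {M : Matrix (Fin n) (Fin n) K} (hM : IsIrreducibleTridiagonal M) :
    M.IsUnreducedLowerHessenberg :=
  ⟨fun i j h ↦ hM.1 i j (Or.inl h), fun i j h ↦ hM.2 i j (Or.inl h)⟩

namespace Matrix.IsUnreducedLowerHessenberg

variable {R : Type*} [CommRing R] [NoZeroDivisors R] {n : ℕ}
  {M : Matrix (Fin (n + 1)) (Fin (n + 1)) R}

theorem eq_zero_of_mulVec_eq_smul (hM : M.IsUnreducedLowerHessenberg) {μ : R}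
    {v : Fin (n + 1) → R} (hv : M *ᵥ v = μ • v) (h0 : v 0 = 0) : v = 0 := by
  suffices h : ∀ k j : Fin (n + 1), j ≤ k → v j = 0 from funext fun j ↦ h j j le_rfl
  intro k
  induction k using Fin.induction with
  | zero => intro j hj; rwa [Fin.le_zero_iff.1 hj]
  | succ k ih =>
    intro j hj
    by_cases hjk : j < k.succ
    · exact ih j (Fin.le_castSucc_iff.2 hjk)
    obtain rfl : j = k.succ := le_antisymm hj (not_lt.1 hjk)
    have hrow := congrFun hv k.castSucc
    rw [mulVec, dotProduct, Finset.sum_eq_single k.succ, Pi.smul_apply, ih k.castSucc le_rfl,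
      smul_zero] at hrow
    · exact (mul_eq_zero.1 hrow).resolve_left (hM.2 _ _ (by simp))
    · intro l _ hl
      rcases lt_or_gt_of_ne hl with hl | hl
      · rw [ih l (Fin.le_castSucc_iff.2 hl), mul_zero]
      · rw [hM.1 _ _ (by simp [Fin.lt_def] at hl ⊢; omega), zero_mul]
    · simp

theorem apply_zero_smul_eq (hM : M.IsUnreducedLowerHessenberg) {μ : R}
    {u w : Fin (n + 1) → R} (hu : M *ᵥ u = μ • u) (hw : M *ᵥ w = μ • w) :
    u 0 • w = w 0 • u :=
  sub_eq_zero.1 <| hM.eq_zero_of_mulVec_eq_smul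
    (by rw [mulVec_sub, mulVec_smul, mulVec_smul, hu, hw, smul_sub, smul_comm (u 0),
      smul_comm (w 0)])
    (by simp [mul_comm])

theorem injective_of_apply_eq_smul {K V ι : Type*} [Field K] [AddCommGroup V] [Module K V]
    {A : Module.End K V} (b : Module.Basis (Fin (n + 1)) K V)
    (hA : (LinearMap.toMatrix b b A).IsUnreducedLowerHessenberg)
    {c : ι → V} (hc : LinearIndependent K c) {θ : ι → K}
    (hAc : ∀ k, A (c k) = θ k • c k) :
    Function.Injective θ := by
  intro i j hij
  by_contra hne
  have hrepr : ∀ k, θ k = θ i →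
      LinearMap.toMatrix b b A *ᵥ b.repr (c k) = θ i • ⇑(b.repr (c k)) := by
    intro k hk
    rw [LinearMap.toMatrix_mulVec_repr, hAc, hk, map_smul, Finsupp.coe_smul]
  have hprop := hA.apply_zero_smul_eq (hrepr i rfl) (hrepr j hij.symm)
  have hdep : (-b.repr (c j) 0) • c i + b.repr (c i) 0 • c j = 0 := by
    apply b.repr.injective
    ext l
    simpa [neg_add_eq_sub, sub_eq_zero] using congrFun hprop l
  obtain ⟨-, hi0⟩ := (LinearIndepOn.pair_iff c hne).1 (hc.linearIndepOn _) _ _ hdep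
  have hci := hA.eq_zero_of_mulVec_eq_smul (hrepr i rfl) hi0
  exact hc.ne_zero i (b.repr.map_eq_zero_iff.1 (DFunLike.coe_injective hci))

end Matrix.IsUnreducedLowerHessenberg

theorem Module.Basis.apply_eq_smul_of_toMatrix_eq_diagonal {R M ι : Type*} [CommRing R]
    [AddCommGroup M] [Module R M] [Fintype ι] [DecidableEq ι] (c : Module.Basis ι R M)
    {A : Module.End R M} {θ : ι → R} (hA : LinearMap.toMatrix c c A = diagonal θ) (k : ι) :
    A (c k) = θ k • c k := by
  rw [← Matrix.toLin_toMatrix c c A, hA, Matrix.toLin_self]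
  simp [diagonal_apply]

def tridiagonalPoly {R : Type*} [CommRing R] (β γ ϱ x y : R) : R :=
  x ^ 2 - β * x * y + y ^ 2 - γ * (x + y) - ϱ

theorem eq_sub_mul_add_of_tridiagonalPoly_eq_zero {K : Type*} [Field K] {β γ ϱ x y z : K}
    (hxy : tridiagonalPoly β γ ϱ x y = 0) (hyz : tridiagonalPoly β γ ϱ y z = 0)
    (hxz : x ≠ z) :
    γ = x - β * y + z := by
  have h : (x - z) * (x - β * y + z - γ) = 0 := by
    unfold tridiagonalPoly at hxy hyz
    linear_combination hxy - hyz
  exact (sub_eq_zero.1 ((mul_eq_zero.1 h).resolve_left (sub_ne_zero.2 hxz))).symm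

theorem Matrix.diagonal_tridiagonal_apply {R ι : Type*} [CommRing R] [Fintype ι] [DecidableEq ι]
    (θ : ι → R) (X : Matrix ι ι R) (β γ ϱ : R) (i j : ι) :
    (diagonal θ ^ 2 * X - β • (diagonal θ * X * diagonal θ) + X * diagonal θ ^ 2 -
      γ • (diagonal θ * X + X * diagonal θ) - ϱ • X) i j =
      tridiagonalPoly β γ ϱ (θ i) (θ j) * X i j := by
  simp only [sq, diagonal_mul_diagonal, sub_apply, add_apply, smul_apply, smul_eq_mul,
    diagonal_mul, mul_diagonal, tridiagonalPoly]
  ring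

theorem tridiagonalPoly_eq_zero_of_toMatrix_ne_zero {K V ι : Type*} [Field K] [AddCommGroup V]
    [Module K V] [Fintype ι] [DecidableEq ι] {A B : Module.End K V} (c : Module.Basis ι K V)
    {θ : ι → K} (hA : LinearMap.toMatrix c c A = diagonal θ) {β γ ϱ : K}
    (hrel : A * (A ^ 2 * B - β • (A * B * A) + B * A ^ 2 - γ • (A * B + B * A) - ϱ • B) =
      (A ^ 2 * B - β • (A * B * A) + B * A ^ 2 - γ • (A * B + B * A) - ϱ • B) * A)
    {i j : ι} (hθ : θ i ≠ θ j) (hB : LinearMap.toMatrix c c B i j ≠ 0) :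
    tridiagonalPoly β γ ϱ (θ i) (θ j) = 0 := by
  have h := congrFun (congrFun (congrArg (LinearMap.toMatrix c c) hrel) i) j
  simp only [map_sub, map_add, map_smul, LinearMap.toMatrix_mul, ← LinearMap.toMatrix_pow, hA,
    diagonal_mul, mul_diagonal, diagonal_tridiagonal_apply] at h
  have h' : (θ i - θ j) *
      (tridiagonalPoly β γ ϱ (θ i) (θ j) * LinearMap.toMatrix c c B i j) = 0 := by
    linear_combination h
  exact (mul_eq_zero.1 ((mul_eq_zero.1 h').resolve_left (sub_ne_zero.2 hθ))).resolve_right hB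

theorem stmt_16 {K V : Type*} [Field K] [AddCommGroup V] [Module K V]
    (d : ℕ) (A B : Module.End K V)
    (b : Module.Basis (Fin (d + 1)) K V)
    (hAtri : IsIrreducibleTridiagonal (LinearMap.toMatrix b b A))
    (c : Module.Basis (Fin (d + 1)) K V)
    (hBtri : IsIrreducibleTridiagonal (LinearMap.toMatrix c c B))
    (hAdiag : (LinearMap.toMatrix c c A).IsDiag)
    (θ : Fin (d + 1) → K) (hθ : ∀ i, θ i = LinearMap.toMatrix c c A i i)
    (β γ γs ϱ ϱs : K)
    (hrel : TridiagonalRelations A B β γ γs ϱ ϱs) :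
    (∀ i : ℕ, (h1 : 1 ≤ i) → (h2 : i + 1 ≤ d) →
      γ = θ ⟨i - 1, by omega⟩ - β * θ ⟨i, by omega⟩ + θ ⟨i + 1, by omega⟩) ∧
    (∀ i : ℕ, (h1 : 1 ≤ i) → (h2 : i ≤ d) →
      ϱ = θ ⟨i - 1, by omega⟩ ^ 2 - β * θ ⟨i - 1, by omega⟩ * θ ⟨i, by omega⟩ +
        θ ⟨i, by omega⟩ ^ 2 - γ * (θ ⟨i - 1, by omega⟩ + θ ⟨i, by omega⟩)) := by
  have hA : LinearMap.toMatrix c c A = diagonal θ := by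
    rw [← hAdiag.diagonal_diag]; exact congrArg diagonal (funext hθ).symm
  have hinj : Function.Injective θ :=
    hAtri.isUnreducedLowerHessenberg.injective_of_apply_eq_smul b c.linearIndependent
      (c.apply_eq_smul_of_toMatrix_eq_diagonal hA)
  have hP : ∀ i j : Fin (d + 1), (i : ℕ) + 1 = j →
      tridiagonalPoly β γ ϱ (θ i) (θ j) = 0 :=
    fun i j h ↦ tridiagonalPoly_eq_zero_of_toMatrix_ne_zero c hA hrel.1
      (hinj.ne fun e ↦ by simp [e] at h) (hBtri.2 i j (Or.inl h))
  refine ⟨fun i h1 h2 ↦ ?_, fun i h1 h2 ↦ ?_⟩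
  · exact eq_sub_mul_add_of_tridiagonalPoly_eq_zero (hP _ _ (by simp; omega)) (hP _ _ rfl)
      (hinj.ne (by simp [Fin.ext_iff]))
  · have h := hP ⟨i - 1, by omega⟩ ⟨i, by omega⟩ (by simp; omega)
    unfold tridiagonalPoly at h
    linear_combination -h
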